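/- arXiv:1509.01503 — 2 statements merged into one kernel-verified Lean document; each statement's English description precedes it below -/
import Mathlib

section
/- If x is a bounded operator on a complex Hilbert space with x - 1 Hilbert-Schmidt and x invertible, then the modulus |x| = (x*x)^{1/2} satisfies |x| - 1 is Hilbert-Schmidt and |x| is invertible. -/
set_option synthInstance.maxHeartbeats 1000000
set_option maxHeartbeats 1000000

open scoped ENNReal
open NormedSpace

noncomputable section

variable {H : Type*} [NormedAddCommGroup H] [InnerProductSpace ℂ H] [CompleteSpace H]

/-- The index set of a chosen Hilbert basis of `H`. -/
def hsIndex (H : Type*) [NormedAddCommGroup H] [InnerProductSpace ℂ H] [CompleteSpace H] :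
    Set H := (exists_hilbertBasis ℂ H).choose

/-- The (possibly infinite) sum `∑ ‖x eᵢ‖²` over a Hilbert basis. -/
def hsSq (x : H →L[ℂ] H) : ℝ≥0∞ := ∑' i : hsIndex H, (‖x i‖₊ : ℝ≥0∞) ^ 2

/-- `x` is a Hilbert-Schmidt operator. -/
def IsHS (x : H →L[ℂ] H) : Prop := hsSq x ≠ ⊤

/-- The Hilbert-Schmidt norm `‖x‖₂`. -/
def hsNorm (x : H →L[ℂ] H) : ℝ := ((hsSq x) ^ (1/2 : ℝ)).toReal

/-- The modulus `|g| = (g* g)^{1/2}`. -/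
def absOp (g : H →L[ℂ] H) : H →L[ℂ] H := CFC.sqrt (star g * g)

/-- The unitary part `u_g = g |g|⁻¹` in the polar decomposition. -/
def umod (g : H →L[ℂ] H) : H →L[ℂ] H := g * Ring.inverse (absOp g)

/-- `GL₂(H) = {g invertible : g - 1 Hilbert-Schmidt}`. -/
def GL2 (H : Type*) [NormedAddCommGroup H] [InnerProductSpace ℂ H] [CompleteSpace H] :
    Set (H →L[ℂ] H) := {g | IsUnit g ∧ IsHS (g - 1)}

/-- The unitary group `U₂(H)`. -/
def U2 (H : Type*) [NormedAddCommGroup H] [InnerProductSpace ℂ H] [CompleteSpace H] :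
    Set (H →L[ℂ] H) := {g | g ∈ unitary (H →L[ℂ] H) ∧ IsHS (g - 1)}

/-- The positive invertible part `GL₂⁺(H)`. -/
def GL2pos (H : Type*) [NormedAddCommGroup H] [InnerProductSpace ℂ H] [CompleteSpace H] :
    Set (H →L[ℂ] H) := {g | IsUnit g ∧ IsHS (g - 1) ∧ 0 ≤ g}

/-- Smooth curves inside `S` joining `p` to `q` (parametrized on `[0,1]`). -/
def curves (S : Set (H →L[ℂ] H)) (p q : H →L[ℂ] H) : Set (ℝ → H →L[ℂ] H) :=
  {γ | ContDiff ℝ 1 γ ∧ (∀ t ∈ Set.Icc (0:ℝ) 1, γ t ∈ S) ∧ γ 0 = p ∧ γ 1 = q}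

/-- Length of a curve with respect to a metric `F` on tangent vectors. -/
def clen (F : (H →L[ℂ] H) → (H →L[ℂ] H) → ℝ) (γ : ℝ → H →L[ℂ] H) : ℝ :=
  ∫ t in (0:ℝ)..1, F (γ t) (deriv γ t)

/-- The geodesic distance inside `S` with respect to the metric `F`. -/
def gdist (S : Set (H →L[ℂ] H)) (F : (H →L[ℂ] H) → (H →L[ℂ] H) → ℝ)
    (p q : H →L[ℂ] H) : ℝ := sInf (clen F '' curves S p q)

/-- Left invariant metric `I(g, v) = ‖g⁻¹ v‖₂`. -/
def leftMetric (g v : H →L[ℂ] H) : ℝ := hsNorm (Ring.inverse g * v)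

/-- Positive metric `𝔭(p, y) = ‖p^{-1/2} y p^{-1/2}‖₂`. -/
def posMetric (p y : H →L[ℂ] H) : ℝ :=
  hsNorm (Ring.inverse (CFC.sqrt p) * y * Ring.inverse (CFC.sqrt p))

/-- Polar (product) length of a pair of curves (unitary part, positive part). -/
def pairLen (γ₁ γ₂ : ℝ → H →L[ℂ] H) : ℝ :=
  ∫ t in (0:ℝ)..1,
    Real.sqrt (leftMetric (γ₁ t) (deriv γ₁ t) ^ 2 + posMetric (γ₂ t) (deriv γ₂ t) ^ 2)

/-- Geodesic distance of the polar metric: infimum of polar lengths over pairs of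
curves, in the unitary set `SU` and the positive set `SP`, joining the polar
decompositions of `p` and `q`. -/
def polarDist (SU SP : Set (H →L[ℂ] H)) (p q : H →L[ℂ] H) : ℝ :=
  sInf {L | ∃ γ₁ ∈ curves SU (umod p) (umod q), ∃ γ₂ ∈ curves SP (absOp p) (absOp q),
    L = pairLen γ₁ γ₂}

/-- `x` is a Cauchy sequence for the distance function `d`. -/
def IsCauchyWith {A : Type*} (d : A → A → ℝ) (x : ℕ → A) : Prop :=
  ∀ ε > 0, ∃ N, ∀ m ≥ N, ∀ n ≥ N, d (x m) (x n) < ε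

/-- `x` converges to `l` for the distance function `d`. -/
def TendsToWith {A : Type*} (d : A → A → ℝ) (x : ℕ → A) (l : A) : Prop :=
  ∀ ε > 0, ∃ N, ∀ n ≥ N, d (x n) l < ε

/-! Hilbert-Schmidt operators form a `*`-closed two-sided ideal, and
`x* x - 1 = x* (x - 1) + (x - 1)*` lies in it. Since `1 + |x| ≥ 1` is invertible,
`|x| - 1 = (x* x - 1)(1 + |x|)⁻¹` lies in it as well; `|x|` is invertible because
`|x|² = x* x` is. -/

open scoped InnerProductSpace

lemma HilbertBasis.tsum_nnnorm_inner_sq {ι 𝕜 E : Type*} [RCLike 𝕜] [NormedAddCommGroup E]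
    [InnerProductSpace 𝕜 E] (b : HilbertBasis ι 𝕜 E) (v : E) :
    ∑' i, (‖⟪b i, v⟫_𝕜‖₊ : ℝ≥0∞) ^ 2 = (‖v‖₊ : ℝ≥0∞) ^ 2 := by
  have hreal := lp.hasSum_norm (p := 2) (by norm_num) (b.repr v)
  simp only [b.repr_apply_apply, LinearIsometryEquiv.norm_map, ENNReal.toReal_ofNat,
    Real.rpow_two] at hreal
  have hnnreal : HasSum (fun i => ‖⟪b i, v⟫_𝕜‖₊ ^ 2) (‖v‖₊ ^ 2) := by
    simpa only [← NNReal.hasSum_coe, NNReal.coe_pow, coe_nnnorm] using hreal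
  simp_rw [← ENNReal.coe_pow]
  exact ENNReal.tsum_coe_eq hnnreal

lemma CFC.sqrt_sub_one_eq_mul_inverse {A : Type*} [CStarAlgebra A] [PartialOrder A]
    [StarOrderedRing A] (a : A) (ha : 0 ≤ a) :
    CFC.sqrt a - 1 = (a - 1) * Ring.inverse (1 + CFC.sqrt a) := by
  have hunit : IsUnit (1 + CFC.sqrt a) :=
    (isStrictlyPositive_one.add_nonneg (CFC.sqrt_nonneg a)).isUnit
  have hfactor : a - 1 = (CFC.sqrt a - 1) * (1 + CFC.sqrt a) := by
    nth_rw 1 [← CFC.sqrt_mul_sqrt_self a ha]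
    noncomm_ring
  rw [hfactor, mul_assoc, Ring.mul_inverse_cancel _ hunit, mul_one]

lemma star_mul_self_sub_one {R : Type*} [Ring R] [StarRing R] (x : R) :
    star x * x - 1 = star x * (x - 1) + star (x - 1) := by
  rw [star_sub, star_one]
  noncomm_ring

def hsBasis (H : Type*) [NormedAddCommGroup H] [InnerProductSpace ℂ H] [CompleteSpace H] :
    HilbertBasis (hsIndex H) ℂ H := (exists_hilbertBasis ℂ H).choose_spec.choose

lemma hsBasis_apply (i : hsIndex H) : hsBasis H i = (i : H) :=
  congrFun (exists_hilbertBasis ℂ H).choose_spec.choose_spec i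

lemma hsSq_star (a : H →L[ℂ] H) : hsSq (star a) = hsSq a := by
  have parseval (v : H) :
      ∑' j : hsIndex H, (‖⟪(j : H), v⟫_ℂ‖₊ : ℝ≥0∞) ^ 2 = (‖v‖₊ : ℝ≥0∞) ^ 2 := by
    simpa only [hsBasis_apply] using (hsBasis H).tsum_nnnorm_inner_sq v
  -- Parseval on both sides: the matrix entries of `a*` are the conjugates of those of `a`.
  calc hsSq (star a)
      = ∑' (i : hsIndex H) (j : hsIndex H), (‖⟪(j : H), star a i⟫_ℂ‖₊ : ℝ≥0∞) ^ 2 :=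
        tsum_congr fun i => (parseval _).symm
    _ = ∑' (j : hsIndex H) (i : hsIndex H), (‖⟪(i : H), a j⟫_ℂ‖₊ : ℝ≥0∞) ^ 2 := by
        rw [ENNReal.tsum_comm]
        refine tsum_congr fun j => tsum_congr fun i => ?_
        rw [ContinuousLinearMap.star_eq_adjoint, ContinuousLinearMap.adjoint_inner_right,
          ← inner_conj_symm, RCLike.nnnorm_conj]
    _ = hsSq a := tsum_congr fun j => parseval _

lemma hsSq_mul_le (a b : H →L[ℂ] H) : hsSq (a * b) ≤ (‖a‖₊ : ℝ≥0∞) ^ 2 * hsSq b := by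
  rw [hsSq, hsSq, ← ENNReal.tsum_mul_left]
  refine ENNReal.tsum_le_tsum fun i => ?_
  rw [← mul_pow, ← ENNReal.coe_mul]
  gcongr
  exact a.le_opNNNorm _

lemma hsSq_add_le (a b : H →L[ℂ] H) : hsSq (a + b) ≤ 2 * (hsSq a + hsSq b) := by
  rw [hsSq, hsSq, hsSq, ← ENNReal.tsum_add, ← ENNReal.tsum_mul_left]
  refine ENNReal.tsum_le_tsum fun i => ?_
  have hle : ‖(a + b) i‖₊ ^ 2 ≤ 2 * (‖a i‖₊ ^ 2 + ‖b i‖₊ ^ 2) :=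
    (pow_le_pow_left₀ zero_le (nnnorm_add_le _ _) 2).trans add_sq_le
  exact_mod_cast hle

namespace IsHS

lemma star {a : H →L[ℂ] H} (ha : IsHS a) : IsHS (star a) := by
  rwa [IsHS, hsSq_star]

lemma mul_left (a : H →L[ℂ] H) {b : H →L[ℂ] H} (hb : IsHS b) : IsHS (a * b) :=
  ne_top_of_le_ne_top (ENNReal.mul_ne_top (by simp) hb) (hsSq_mul_le a b)

lemma mul_right {a : H →L[ℂ] H} (ha : IsHS a) (b : H →L[ℂ] H) : IsHS (a * b) := by
  simpa only [star_mul, star_star] using (ha.star.mul_left (Star.star b)).star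

lemma add {a b : H →L[ℂ] H} (ha : IsHS a) (hb : IsHS b) : IsHS (a + b) :=
  ne_top_of_le_ne_top (ENNReal.mul_ne_top (by simp) (ENNReal.add_ne_top.mpr ⟨ha, hb⟩))
    (hsSq_add_le a b)

end IsHS

/-- If `x` is invertible with `x - 1` Hilbert-Schmidt, then the modulus `|x| = (x*x)^{1/2}`
is invertible with `|x| - 1` Hilbert-Schmidt. -/
theorem modulus_mem_GL2 (x : H →L[ℂ] H) (hx : IsUnit x) (hxHS : IsHS (x - 1)) :
    IsHS (absOp x - 1) ∧ IsUnit (absOp x) := by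
  refine ⟨?_, (CFC.isUnit_sqrt_iff _).mpr (hx.star.mul hx)⟩
  rw [absOp, CFC.sqrt_sub_one_eq_mul_inverse _ (star_mul_self_nonneg x), star_mul_self_sub_one]
  exact ((hxHS.mul_left _).add hxHS.star).mul_right _
end
end

section
/- Let G be a closed connected Banach-Lie subgroup of GL₂(H) with G* = G, with Lie algebra g, equipped with the left-invariant metric I(g, v) = ‖g^{-1}v‖₂ on tangent spaces T_g G = g·g. Then for g₀ ∈ G and v₀ ∈ g, the curve α(t) = g₀ e^{t v₀*} e^{t(v₀ - v₀*)} lies in G and is a geodesic of the Levi-Civita connection of the left-invariant metric (i.e., D_t α' = 0). -/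
set_option synthInstance.maxHeartbeats 1000000
set_option maxHeartbeats 1000000

open scoped ENNReal
open NormedSpace

noncomputable section

variable {H : Type*} [NormedAddCommGroup H] [InnerProductSpace ℂ H] [CompleteSpace H]

/-- The curve `α(t) = g₀ e^{t v₀*} e^{t (v₀ - v₀*)}`. -/
def geo (g₀ v₀ : H →L[ℂ] H) : ℝ → H →L[ℂ] H := fun t =>
  g₀ * NormedSpace.exp (t • star v₀) * NormedSpace.exp (t • (v₀ - star v₀))

/-- The left logarithmic velocity `β = α⁻¹ α'` of a curve `α`. -/
def lvel (α : ℝ → H →L[ℂ] H) : ℝ → H →L[ℂ] H := fun t => Ring.inverse (α t) * deriv α t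

/-!
Write `B = v₀ - v₀*`, which is skew-adjoint. The left velocity of `α` is
`μ(t) = e^{-tB} v₀* e^{tB} + B`, and since `B` commutes with `e^{tB}`,
`μ* = e^{-tB} v₀ e^{tB} - B = μ - B`. Differentiating the conjugation gives
`μ' = [μ - B, B] = [μ*, μ]`. As `β = μ`, the covariant derivative reduces to `μ' + [μ, μ*]`,
which therefore vanishes.
-/

theorem sub_star_mem_skewAdjoint {R : Type*} [AddCommGroup R] [StarAddMonoid R] (v : R) :
    v - star v ∈ skewAdjoint R :=
  skewAdjoint.mem_iff.2 (by rw [star_sub, star_star, neg_sub])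

section StarNormedRing

variable {𝔸 : Type*} [NormedRing 𝔸] [StarRing 𝔸] [ContinuousStar 𝔸]

theorem star_exp_of_mem_skewAdjoint {x : 𝔸} (hx : x ∈ skewAdjoint 𝔸) :
    star (exp x) = exp (-x) := by
  rw [star_exp, skewAdjoint.mem_iff.1 hx]

theorem star_exp_neg_mul_mul_exp_of_mem_skewAdjoint {x : 𝔸} (hx : x ∈ skewAdjoint 𝔸) (a : 𝔸) :
    star (exp (-x) * a * exp x) = exp (-x) * star a * exp x := by
  rw [star_mul, star_mul, star_exp_of_mem_skewAdjoint hx,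
    star_exp_of_mem_skewAdjoint (neg_mem hx), neg_neg, mul_assoc]

end StarNormedRing

section RealBanachAlgebra

variable {𝔸 : Type*} [NormedRing 𝔸] [NormedAlgebra ℝ 𝔸] [CompleteSpace 𝔸]

theorem exp_neg_mul_exp (x : 𝔸) : exp (-x) * exp x = 1 := by
  let : NormedAlgebra ℚ 𝔸 := NormedAlgebra.restrictScalars ℚ ℝ 𝔸
  rw [← exp_add_of_commute (Commute.refl x).neg_left, neg_add_cancel, exp_zero]

theorem exp_mul_exp_neg (x : 𝔸) : exp x * exp (-x) = 1 := by
  simpa using exp_neg_mul_exp (-x)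

theorem hasDerivAt_mul_exp_smul_mul_exp_smul (g A B : 𝔸) (t : ℝ) :
    HasDerivAt (fun s : ℝ => g * exp (s • A) * exp (s • B))
      (g * exp (t • A) * exp (t • B) * (exp (-(t • B)) * A * exp (t • B) + B)) t := by
  refine (((hasDerivAt_exp_smul_const A t).const_mul g).mul
    (hasDerivAt_exp_smul_const B t)).congr_deriv ?_
  calc g * (exp (t • A) * A) * exp (t • B) + g * exp (t • A) * (exp (t • B) * B)
      = g * exp (t • A) * (exp (t • B) * exp (-(t • B))) * A * exp (t • B)
          + g * exp (t • A) * exp (t • B) * B := by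
        rw [exp_mul_exp_neg]; noncomm_ring
    _ = _ := by noncomm_ring

theorem hasDerivAt_exp_neg_smul_mul_mul_exp_smul (A B : 𝔸) (t : ℝ) :
    HasDerivAt (fun s : ℝ => exp (-(s • B)) * A * exp (s • B))
      (exp (-(t • B)) * A * exp (t • B) * B - B * (exp (-(t • B)) * A * exp (t • B))) t := by
  simp_rw [← smul_neg]
  refine (((hasDerivAt_exp_smul_const' (-B) t).mul_const A).mul
    (hasDerivAt_exp_smul_const B t)).congr_deriv ?_
  noncomm_ring

theorem exp_neg_mul_mul_exp_of_commute {x y : 𝔸} (h : Commute x y) :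
    exp (-x) * y * exp x = y := by
  rw [mul_assoc, h.symm.exp_right.eq, ← mul_assoc, exp_neg_mul_exp, one_mul]

end RealBanachAlgebra

section RealBanachStarAlgebra

variable {𝔸 : Type*} [NormedRing 𝔸] [NormedAlgebra ℝ 𝔸] [CompleteSpace 𝔸] [StarRing 𝔸]
  [ContinuousStar 𝔸] [StarModule ℝ 𝔸]

def geoVel (v : 𝔸) (t : ℝ) : 𝔸 :=
  exp (-(t • (v - star v))) * star v * exp (t • (v - star v)) + (v - star v)

theorem star_geoVel (v : 𝔸) (t : ℝ) :
    star (geoVel v t) = geoVel v t - (v - star v) := by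
  have hB := sub_star_mem_skewAdjoint v
  have htB := skewAdjoint.smul_mem t hB
  calc star (geoVel v t)
      = exp (-(t • (v - star v))) * v * exp (t • (v - star v)) - (v - star v) := by
        rw [geoVel, star_add, star_exp_neg_mul_mul_exp_of_mem_skewAdjoint htB, star_star,
          skewAdjoint.mem_iff.1 hB, ← sub_eq_add_neg]
    _ = exp (-(t • (v - star v))) * star v * exp (t • (v - star v))
          + exp (-(t • (v - star v))) * (v - star v) * exp (t • (v - star v)) - (v - star v) := by
        noncomm_ring
    _ = geoVel v t - (v - star v) := by
        rw [exp_neg_mul_mul_exp_of_commute ((Commute.refl _).smul_left t), geoVel]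

theorem hasDerivAt_geoVel (v : 𝔸) (t : ℝ) :
    HasDerivAt (geoVel v)
      (star (geoVel v t) * geoVel v t - geoVel v t * star (geoVel v t)) t := by
  refine ((hasDerivAt_exp_neg_smul_mul_mul_exp_smul (star v) (v - star v) t).add_const
    (v - star v)).congr_deriv ?_
  rw [star_geoVel, geoVel]
  noncomm_ring

end RealBanachStarAlgebra

theorem lvel_geo {g₀ : H →L[ℂ] H} (hg₀ : IsUnit g₀) (v₀ : H →L[ℂ] H) :
    lvel (geo g₀ v₀) = geoVel v₀ := by
  funext t
  have hexp (x : H →L[ℂ] H) : IsUnit (exp x) :=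
    isUnit_iff_exists.2 ⟨exp (-x), exp_mul_exp_neg x, exp_neg_mul_exp x⟩
  have hunit : IsUnit (geo g₀ v₀ t) := (hg₀.mul (hexp _)).mul (hexp _)
  rw [lvel, show deriv (geo g₀ v₀) t = _ from
    (hasDerivAt_mul_exp_smul_mul_exp_smul g₀ (star v₀) (v₀ - star v₀) t).deriv]
  exact Ring.inverse_mul_cancel_left _ _ hunit

theorem add_inv_two_smul_brackets_eq_zero {R : Type*} [Ring R] [Module ℝ R] {d μ ν : R}
    (hd : d = ν * μ - μ * ν) :
    d + (2⁻¹ : ℝ) • ((μ * μ - μ * μ) + (μ * ν - ν * μ) + (μ * ν - ν * μ)) = 0 := by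
  rw [sub_self, zero_add, ← two_smul ℝ, smul_smul, inv_mul_cancel₀ two_ne_zero, one_smul, hd]
  abel

theorem left_invariant_geodesic_general (G : Set (H →L[ℂ] H)) (𝔤 : Submodule ℝ (H →L[ℂ] H))
    (hG : G ⊆ GL2 H) (hmul : ∀ a ∈ G, ∀ b ∈ G, a * b ∈ G)
    (h𝔤star : ∀ v ∈ 𝔤, star v ∈ 𝔤)
    (hExp : ∀ v ∈ 𝔤, ∀ t : ℝ, NormedSpace.exp (t • v) ∈ G)
    (g₀ v₀ : H →L[ℂ] H) (hg₀ : g₀ ∈ G) (hv₀ : v₀ ∈ 𝔤) :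
    (∀ t : ℝ, geo g₀ v₀ t ∈ G) ∧
    ∀ t : ℝ,
      deriv (lvel (geo g₀ v₀)) t +
        (2⁻¹ : ℝ) •
          ((lvel (geo g₀ v₀) t * lvel (geo g₀ v₀) t -
              lvel (geo g₀ v₀) t * lvel (geo g₀ v₀) t) +
            (lvel (geo g₀ v₀) t * star (lvel (geo g₀ v₀) t) -
              star (lvel (geo g₀ v₀) t) * lvel (geo g₀ v₀) t) +
            (lvel (geo g₀ v₀) t * star (lvel (geo g₀ v₀) t) -
              star (lvel (geo g₀ v₀) t) * lvel (geo g₀ v₀) t)) = 0 := by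
  have hstar𝔤 : star v₀ ∈ 𝔤 := h𝔤star v₀ hv₀
  have hskew𝔤 : v₀ - star v₀ ∈ 𝔤 := 𝔤.sub_mem hv₀ hstar𝔤
  refine ⟨fun t => hmul _ (hmul _ hg₀ _ (hExp _ hstar𝔤 t)) _ (hExp _ hskew𝔤 t), fun t => ?_⟩
  rw [lvel_geo (hG hg₀).1]
  exact add_inv_two_smul_brackets_eq_zero (hasDerivAt_geoVel v₀ t).deriv

/-- For a closed connected self-adjoint Banach-Lie subgroup `G ⊆ GL₂(H)` with Lie algebra
`𝔤`, the curve `α(t) = g₀ e^{t v₀*} e^{t(v₀ - v₀*)}` lies in `G` and is a geodesic of the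
left invariant metric: with `β = μ = α⁻¹ α'`, it satisfies
`μ' + (1/2)([β,μ] + [β,μ*] + [μ,β*]) = 0`. -/
theorem left_invariant_geodesic (G : Set (H →L[ℂ] H)) (𝔤 : Submodule ℝ (H →L[ℂ] H))
    (hG : G ⊆ GL2 H) (h1 : 1 ∈ G) (hmul : ∀ a ∈ G, ∀ b ∈ G, a * b ∈ G)
    (hinv : ∀ a ∈ G, Ring.inverse a ∈ G) (hstarG : ∀ a ∈ G, star a ∈ G)
    (hGclosed : IsClosed G) (hGconn : IsPreconnected G)
    (h𝔤closed : IsClosed (𝔤 : Set (H →L[ℂ] H)))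
    (h𝔤HS : ∀ v ∈ 𝔤, IsHS v)
    (h𝔤br : ∀ v ∈ 𝔤, ∀ w ∈ 𝔤, v * w - w * v ∈ 𝔤)
    (h𝔤star : ∀ v ∈ 𝔤, star v ∈ 𝔤)
    (hExp : ∀ v ∈ 𝔤, ∀ t : ℝ, NormedSpace.exp (t • v) ∈ G)
    (g₀ v₀ : H →L[ℂ] H) (hg₀ : g₀ ∈ G) (hv₀ : v₀ ∈ 𝔤) :
    (∀ t : ℝ, geo g₀ v₀ t ∈ G) ∧
    ∀ t : ℝ,
      deriv (lvel (geo g₀ v₀)) t +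
        (2⁻¹ : ℝ) •
          ((lvel (geo g₀ v₀) t * lvel (geo g₀ v₀) t -
              lvel (geo g₀ v₀) t * lvel (geo g₀ v₀) t) +
            (lvel (geo g₀ v₀) t * star (lvel (geo g₀ v₀) t) -
              star (lvel (geo g₀ v₀) t) * lvel (geo g₀ v₀) t) +
            (lvel (geo g₀ v₀) t * star (lvel (geo g₀ v₀) t) -
              star (lvel (geo g₀ v₀) t) * lvel (geo g₀ v₀) t)) = 0 :=
  left_invariant_geodesic_general G 𝔤 hG hmul h𝔤star hExp g₀ v₀ hg₀ hv₀
end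
end
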